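/- Let T be a finite plane tree with numbers x_u assigned to non-root nodes as x_u = d(u) + Σ_{i=1}^{d(u)} c(u_i)(m+2)^{-i} (m the maximal arity). If u and v are distinct non-root nodes of the same depth with u appearing strictly to the left of v in T (in the planar order), then x_u > x_v. -/

import Mathlib

inductive PlaneTree where
  | node : List PlaneTree → PlaneTree

namespace PlaneTree

def childrenOf : PlaneTree → List PlaneTree
  | .node cs => cs

def numNodes : PlaneTree → ℕ
  | .node cs => 1 + (cs.attach.map (fun c => numNodes c.1)).sum
decreasing_by have := List.sizeOf_lt_of_mem c.2; simp only [PlaneTree.node.sizeOf_spec]; omega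

/-- maximal number of children of a node of the tree -/
def maxArity : PlaneTree → ℕ
  | .node cs => max cs.length ((cs.attach.map (fun c => maxArity c.1)).foldr max 0)
decreasing_by have := List.sizeOf_lt_of_mem c.2; simp only [PlaneTree.node.sizeOf_spec]; omega

/-- the subtree rooted at the node reached by following the path `p` of
(0-based, left-to-right) child indices from the root, if it exists. -/
def subtreeAt : PlaneTree → List ℕ → Option PlaneTree
  | t, [] => some t
  | t, i :: p =>
    match (childrenOf t)[i]? with
    | some c => subtreeAt c p
    | none => none

/-- `p` is a valid path to a node of `t` (the root is `[]`); the depth of the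
corresponding node is `p.length`. -/
def IsNode (t : PlaneTree) (p : List ℕ) : Prop := (t.subtreeAt p).isSome

/-- number of children of the node at path `p` (0 if the path is invalid). -/
def arityAt (t : PlaneTree) (p : List ℕ) : ℕ :=
  ((t.subtreeAt p).map (fun s => s.childrenOf.length)).getD 0

/-- `c(u_{i+1})`: the sibling index, counted from right to left starting at 1,
of the node at depth `i+1` on the path `p`. -/
def cAt (t : PlaneTree) (p : List ℕ) (i : ℕ) : ℕ :=
  arityAt t (p.take i) - p.getD i 0

/-- `x_u = d(u) + Σ_{i=1}^{d(u)} c(u_i) (m+2)^{-i}` for the node `u` at path `p`,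
where `m` is the maximal arity of `t`. -/
noncomputable def xVal (t : PlaneTree) (p : List ℕ) : ℝ :=
  (p.length : ℝ) + ∑ i ∈ Finset.range p.length,
    (cAt t p i : ℝ) * ((maxArity t : ℝ) + 2) ^ (-(i + 1 : ℤ))

end PlaneTree

open PlaneTree

/-!
Both depths agree, so only the fractional parts `Σ c(u_i) (m+2)^{-i}` are compared: they are
base-`(m+2)` expansions with digits in `[0, m]`. At the first level `k` where the paths of `u` and
`v` diverge, `u` branches further left, so its digit `c(u_k)` exceeds `c(v_k)` by at least one;
this outweighs the remaining digits, since `m Σ_{i>k} (m+2)^{-i} < (m+2)^{-k}`.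
-/

open Finset

theorem inv_pow_le_sum_sub_mul_inv_pow {B : ℝ} (hB : 0 < B) {a b : ℕ → ℝ} {j : ℕ}
    (heq : ∀ i < j, a i = b i) (hj : b j + 1 ≤ a j) (ha : ∀ i, 0 ≤ a i)
    (hb : ∀ i, b i ≤ B - 1) {n : ℕ} (hn : j < n) :
    B⁻¹ ^ n ≤ ∑ i ∈ range n, (a i - b i) * B⁻¹ ^ (i + 1) := by
  have hr : 0 < B⁻¹ := inv_pos.2 hB
  induction n, hn using Nat.le_induction with
  | base =>
    have hprefix : ∑ i ∈ range j, (a i - b i) * B⁻¹ ^ (i + 1) = 0 :=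
      sum_eq_zero fun i hi => by rw [heq i (mem_range.1 hi), sub_self, zero_mul]
    rw [sum_range_succ, hprefix, zero_add]
    show B⁻¹ ^ (j + 1) ≤ _
    nlinarith [pow_pos hr (j + 1)]
  | succ n _ ih =>
    -- the worst case `a n - b n = -(B - 1)` loses exactly `B⁻¹ ^ n - B⁻¹ ^ (n + 1)`
    have hshift : B⁻¹ ^ n = B * B⁻¹ ^ (n + 1) := by
      rw [pow_succ, mul_left_comm, mul_inv_cancel₀ hB.ne', mul_one]
    rw [sum_range_succ]
    nlinarith [ha n, hb n, pow_pos hr (n + 1)]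

theorem sum_mul_zpow_lt_of_digits {B : ℝ} (hB : 0 < B) {a b : ℕ → ℝ} {j n : ℕ} (hn : j < n)
    (heq : ∀ i < j, a i = b i) (hj : b j + 1 ≤ a j) (ha : ∀ i, 0 ≤ a i)
    (hb : ∀ i, b i ≤ B - 1) :
    ∑ i ∈ range n, b i * B ^ (-(i + 1 : ℤ)) < ∑ i ∈ range n, a i * B ^ (-(i + 1 : ℤ)) := by
  have hzpow : ∀ i : ℕ, B ^ (-(i + 1 : ℤ)) = B⁻¹ ^ (i + 1) := fun i => by
    rw [← inv_zpow', ← zpow_natCast]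
    push_cast
    rfl
  have hdiff := inv_pow_le_sum_sub_mul_inv_pow hB heq hj ha hb hn
  simp only [hzpow, sub_mul, sum_sub_distrib] at hdiff ⊢
  linarith [pow_pos (inv_pos.2 hB) n]

theorem List.Lex.exists_take_eq_getD_lt {p q : List ℕ} (h : List.Lex (· < ·) p q)
    (hlen : p.length = q.length) :
    ∃ j < p.length, p.take j = q.take j ∧ p.getD j 0 < q.getD j 0 := by
  induction h with
  | nil => simp at hlen
  | cons _ ih =>
    obtain ⟨j, hj, htake, hlt⟩ := ih (by simpa using hlen)
    exact ⟨j + 1, by simpa using hj, by simp [htake], by simpa using hlt⟩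
  | rel hab => exact ⟨0, by simp, rfl, by simpa using hab⟩

namespace PlaneTree

theorem subtreeAt_append (t : PlaneTree) (p q : List ℕ) :
    t.subtreeAt (p ++ q) = (t.subtreeAt p).bind (·.subtreeAt q) := by
  induction p generalizing t with
  | nil => rfl
  | cons i p ih =>
    simp only [List.cons_append, subtreeAt]
    cases (childrenOf t)[i]? <;> simp [ih]

theorem maxArity_le_of_mem_childrenOf {t c : PlaneTree} (hc : c ∈ t.childrenOf) :
    maxArity c ≤ maxArity t := by
  cases t with
  | node cs =>
    rw [maxArity]
    exact le_max_of_le_right (List.le_max_of_le' 0 (List.mem_map.2 ⟨⟨c, hc⟩, by simp, rfl⟩) le_rfl)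

theorem maxArity_le_of_subtreeAt_eq_some {t s : PlaneTree} {p : List ℕ}
    (h : t.subtreeAt p = some s) : maxArity s ≤ maxArity t := by
  induction p generalizing t with
  | nil => cases h; rfl
  | cons i p ih =>
    rw [subtreeAt] at h
    cases hc : (childrenOf t)[i]? with
    | none => simp [hc] at h
    | some c =>
      rw [hc] at h
      exact (ih h).trans (maxArity_le_of_mem_childrenOf (List.mem_of_getElem? hc))

theorem length_childrenOf_le_maxArity (s : PlaneTree) : s.childrenOf.length ≤ maxArity s := by
  cases s with
  | node cs => rw [maxArity, childrenOf]; exact le_max_left _ _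

theorem arityAt_le_maxArity (t : PlaneTree) (u : List ℕ) : arityAt t u ≤ maxArity t := by
  rw [arityAt]
  cases hs : t.subtreeAt u with
  | none => exact Nat.zero_le _
  | some s =>
    exact (length_childrenOf_le_maxArity s).trans (maxArity_le_of_subtreeAt_eq_some hs)

theorem cAt_le_maxArity (t : PlaneTree) (p : List ℕ) (i : ℕ) : cAt t p i ≤ maxArity t :=
  (Nat.sub_le _ _).trans (arityAt_le_maxArity t _)

theorem IsNode.getD_lt_arityAt {t : PlaneTree} {q : List ℕ} (h : IsNode t q) {i : ℕ}
    (hi : i < q.length) : q.getD i 0 < arityAt t (q.take i) := by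
  rw [IsNode, ← List.take_append_drop i q, subtreeAt_append, List.drop_eq_getElem_cons hi] at h
  cases hs : t.subtreeAt (q.take i) with
  | none => simp [hs] at h
  | some s =>
    simp only [hs, Option.bind_some, subtreeAt] at h
    rw [arityAt, hs, Option.map_some, Option.getD_some, List.getD_eq_getElem _ _ hi]
    by_contra! hge
    simp [List.getElem?_eq_none hge] at h

theorem cAt_eq_of_take_eq {t : PlaneTree} {p q : List ℕ} {j : ℕ} (h : p.take j = q.take j)
    {i : ℕ} (hi : i < j) : cAt t p i = cAt t q i := by
  have htake : p.take i = q.take i := by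
    simpa [List.take_take, hi.le] using congrArg (·.take i) h
  have hget : p.getD i 0 = q.getD i 0 := by
    simpa [List.getD_eq_getElem?_getD, List.getElem?_take, hi] using congrArg (·.getD i 0) h
  rw [cAt, cAt, htake, hget]

theorem cAt_add_one_le_of_getD_lt {t : PlaneTree} {p q : List ℕ} (hq : IsNode t q) {j : ℕ}
    (hj : j < q.length) (htake : p.take j = q.take j) (hlt : p.getD j 0 < q.getD j 0) :
    cAt t q j + 1 ≤ cAt t p j := by
  have := hq.getD_lt_arityAt hj
  rw [cAt, cAt, htake]
  omega

end PlaneTree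

theorem xVal_strict_anti_left_to_right_general (t : PlaneTree) (p q : List ℕ)
    (hq : IsNode t q)
    (hlen : p.length = q.length) (hlex : List.Lex (· < ·) p q) :
    xVal t q < xVal t p := by
  obtain ⟨j, hj, htake, hlt⟩ := hlex.exists_take_eq_getD_lt hlen
  rw [hlen] at hj
  rw [xVal, xVal, hlen, add_lt_add_iff_left]
  refine sum_mul_zpow_lt_of_digits (by positivity) hj
    (fun i hi => by rw [cAt_eq_of_take_eq htake hi])
    (by exact_mod_cast cAt_add_one_le_of_getD_lt hq hj htake hlt)
    (fun _ => Nat.cast_nonneg _) (fun i => ?_)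
  have : (cAt t q i : ℝ) ≤ maxArity t := by exact_mod_cast cAt_le_maxArity t q i
  linarith

/-- If `u` and `v` are distinct non-root nodes of the same depth with `u`
strictly to the left of `v` in the planar order (lexicographic order on paths
of left-to-right child indices), then `x_u > x_v`. -/
theorem xVal_strict_anti_left_to_right (t : PlaneTree) (p q : List ℕ)
    (hp : IsNode t p) (hq : IsNode t q) (hp0 : p ≠ []) (hq0 : q ≠ [])
    (hlen : p.length = q.length) (hlex : List.Lex (· < ·) p q) :
    xVal t q < xVal t p :=
  xVal_strict_anti_left_to_right_general t p q hq hlen hlex
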